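/- Theorem 3.1 (convergence of the ideal algorithm): under the exponential family matching condition, for every x* with domination measure zero there is a sequence of sampling parameters whose mean sufficient statistics converge to Γ(x*). Concretely: suppose for each k, π_k = {A_{1,k},...,A_{I_k,k}} is a partition of A_k = {x ∈ X : D(x) ≤ γ_k} with γ_k → 0 and max_i diam(A_{i,k}) → 0, each A_{i,k} has positive measure or is empty, Γ is continuous, and θ_{i,k} satisfies E_{θ_{i,k}}[Γ] = E_{h_{i,k}}[Γ] where h_{i,k} is uniform on A_{i,k}. Then for every x* with D(x*) = 0 there exist indices i_k with x* ∈ A_{i_k,k} and lim_{k→∞} E_{θ_{i_k,k}}[Γ(x)] = Γ(x*). -/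

import Mathlib

open MeasureTheory Filter

/-- Pareto dominance: `y` dominates `x` w.r.t. objectives `f`. -/
def Dominates {α : Type*} {n : ℕ} (f : α → Fin n → ℝ) (y x : α) : Prop :=
  (∀ i, f y i ≤ f x i) ∧ ∃ j, f y j < f x j

open Metric Topology
open scoped ENNReal

/-! Near `x*` the cells `A_{i_k,k}` containing `x*` shrink to `x*`, so by continuity `Γ` is
uniformly close to `Γ x*` on them, and so is its uniform average over such a cell, which moment
matching makes equal to `E_{θ_{i_k,k}}[Γ]`. -/

section SetAverage

variable {α E : Type*} [MeasurableSpace α] {μ : Measure α}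
  [NormedAddCommGroup E] [NormedSpace ℝ E] [CompleteSpace E]

theorem dist_setAverage_le_of_forall_dist_le {s : Set α} {f : α → E} {c : E} {ε : ℝ}
    (hμ₀ : μ s ≠ 0) (hμ : μ s ≠ ∞) (hfi : IntegrableOn f s μ)
    (hfs : ∀ y ∈ s, dist (f y) c ≤ ε) :
    dist (⨍ y in s, f y ∂μ) c ≤ ε := by
  have hpos : 0 < μ.real s := ENNReal.toReal_pos hμ₀ hμ
  have hsub : ⨍ y in s, f y ∂μ - c = (μ.real s)⁻¹ • ∫ y in s, (f y - c) ∂μ := by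
    rw [integral_sub hfi (integrableOn_const hμ), setIntegral_const, smul_sub, smul_smul,
      inv_mul_cancel₀ hpos.ne', one_smul, setAverage_eq]
  have hint : ‖∫ y in s, (f y - c) ∂μ‖ ≤ ε * μ.real s :=
    norm_setIntegral_le_of_norm_le_const hμ.lt_top fun y hy => by
      simpa only [dist_eq_norm] using hfs y hy
  calc dist (⨍ y in s, f y ∂μ) c = (μ.real s)⁻¹ * ‖∫ y in s, (f y - c) ∂μ‖ := by
        rw [dist_eq_norm, hsub, norm_smul, Real.norm_of_nonneg (inv_nonneg.2 hpos.le)]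
    _ ≤ (μ.real s)⁻¹ * (ε * μ.real s) := by gcongr
    _ = ε := by field_simp

theorem tendsto_setAverage_of_tendsto_diam [PseudoMetricSpace α] {ι : Type*} {l : Filter ι}
    {s : ι → Set α} {f : α → E} {x : α}
    (hx : ∀ i, x ∈ s i) (hbdd : ∀ i, Bornology.IsBounded (s i))
    (hdiam : Tendsto (fun i => diam (s i)) l (𝓝 0))
    (hμ₀ : ∀ i, μ (s i) ≠ 0) (hμ : ∀ i, μ (s i) ≠ ∞) (hfi : ∀ i, IntegrableOn f (s i) μ)
    (hf : ContinuousAt f x) :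
    Tendsto (fun i => ⨍ y in s i, f y ∂μ) l (𝓝 (f x)) := by
  rw [Metric.tendsto_nhds]
  intro ε hε
  obtain ⟨δ, hδ, hfδ⟩ := Metric.continuousAt_iff.mp hf (ε / 2) (half_pos hε)
  filter_upwards [(tendsto_order.1 hdiam).2 δ hδ] with i hi
  have hclose : ∀ y ∈ s i, dist (f y) (f x) ≤ ε / 2 := fun y hy =>
    (hfδ ((dist_le_diam_of_mem (hbdd i) hy (hx i)).trans_lt hi)).le
  exact (dist_setAverage_le_of_forall_dist_le (hμ₀ i) (hμ i) (hfi i) hclose).trans_lt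
    (half_lt_self hε)

end SetAverage

theorem tendsto_diam_of_tendsto_iSup_diam {ι α : Type*} [PseudoMetricSpace α] {l : Filter ι}
    {κ : ι → Type*} [∀ i, Finite (κ i)] {A : (i : ι) → κ i → Set α}
    (hmesh : Tendsto (fun i => ⨆ j, diam (A i j)) l (𝓝 0)) (idx : (i : ι) → κ i) :
    Tendsto (fun i => diam (A i (idx i))) l (𝓝 0) :=
  tendsto_of_tendsto_of_tendsto_of_le_of_le tendsto_const_nhds hmesh (fun _ => diam_nonneg)
    fun i => le_ciSup (f := fun j => diam (A i j)) (Set.finite_range _).bddAbove (idx i)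

theorem ideal_algorithm_convergence_general {d m : ℕ}
    (X : Set (Fin d → ℝ))
    (hXbdd : Bornology.IsBounded X)
    (D : (Fin d → ℝ) → ℝ)
    (Γ : (Fin d → ℝ) → Fin m → ℝ) (hΓ : Continuous Γ)
    (γ : ℕ → ℝ) (hγmem : ∀ k, 0 < γ k ∧ γ k ≤ 1)
    (I : ℕ → ℕ) (A : (k : ℕ) → Fin (I k) → Set (Fin d → ℝ))
    (hcover : ∀ k, (⋃ i, A k i) = {x ∈ X | D x ≤ γ k})
    (hposOrEmpty : ∀ k i, A k i = ∅ ∨ 0 < volume (A k i))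
    (hmag : Tendsto (fun k => ⨆ i, Metric.diam (A k i)) atTop (nhds 0))
    (Θty : Type*) (θ : (k : ℕ) → Fin (I k) → Θty)
    (EΓ : Θty → (Fin m → ℝ))
    -- moment matching: E_{θ_{i,k}}[Γ] = E_{h_{i,k}}[Γ], h_{i,k} uniform on A_{i,k}
    (hmatch : ∀ k i, (A k i).Nonempty →
      EΓ (θ k i) = ((volume (A k i)).toReal)⁻¹ • ∫ x in A k i, Γ x) :
    ∀ xstar ∈ X, D xstar = 0 →
      ∃ idx : (k : ℕ) → Fin (I k),
        (∀ k, xstar ∈ A k (idx k)) ∧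
        Tendsto (fun k => EΓ (θ k (idx k))) atTop (nhds (Γ xstar)) := by
  intro xstar hxX hxD
  have hcell : ∀ k, ∃ i, xstar ∈ A k i := fun k =>
    Set.mem_iUnion.1 <| (hcover k).symm ▸ ⟨hxX, hxD ▸ (hγmem k).1.le⟩
  choose idx hidx using hcell
  have hsubX : ∀ k i, A k i ⊆ X := fun k i =>
    ((Set.subset_iUnion (A k) i).trans (hcover k).subset).trans (Set.sep_subset _ _)
  have hbdd : ∀ k, Bornology.IsBounded (A k (idx k)) := fun k => hXbdd.subset (hsubX k _)
  have hpos : ∀ k, volume (A k (idx k)) ≠ 0 := fun k =>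
    ((hposOrEmpty k (idx k)).resolve_left (Set.nonempty_of_mem (hidx k)).ne_empty).ne'
  have hint : ∀ k, IntegrableOn Γ (A k (idx k)) := fun k =>
    (hΓ.continuousOn.integrableOn_compact (hbdd k).isCompact_closure).mono_set subset_closure
  have hEΓ : ∀ k, EΓ (θ k (idx k)) = ⨍ x in A k (idx k), Γ x := fun k => by
    rw [hmatch k _ ⟨xstar, hidx k⟩, setAverage_eq, measureReal_def]
  refine ⟨idx, hidx, ?_⟩
  simp only [hEΓ]
  exact tendsto_setAverage_of_tendsto_diam hidx hbdd (tendsto_diam_of_tendsto_iSup_diam hmag idx)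
    hpos (fun k => (hbdd k).measure_lt_top.ne) hint hΓ.continuousAt

/-- Theorem 3.1 (convergence of the ideal algorithm): suppose for each `k`,
`π_k = {A_{1,k}, …, A_{I_k,k}}` is a partition of `A_k = {x ∈ X : D(x) ≤ γ_k}`,
where `D` is the domination measure, `γ_k → 0`, and the magnitude
`max_i diam(A_{i,k}) → 0`; each cell is empty or has positive measure; `Γ` is
continuous; and the sampling parameters `θ_{i,k}` satisfy the exponential-family
moment-matching condition `E_{θ_{i,k}}[Γ] = E_{h_{i,k}}[Γ]` with `h_{i,k}` uniform
on `A_{i,k}`. Then for every `x*` with `D(x*) = 0` there are indices `i_k` with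
`x* ∈ A_{i_k,k}` and `E_{θ_{i_k,k}}[Γ] → Γ(x*)`. -/
theorem ideal_algorithm_convergence {d n m : ℕ}
    (X : Set (Fin d → ℝ)) (hXmeas : MeasurableSet X)
    (hXbdd : Bornology.IsBounded X)
    (hXpos : 0 < volume X) (hXfin : volume X < ⊤)
    (f : (Fin d → ℝ) → Fin n → ℝ)
    (D : (Fin d → ℝ) → ℝ)
    (hD : ∀ x, D x = (volume {y ∈ X | Dominates f y x}).toReal / (volume X).toReal)
    (Γ : (Fin d → ℝ) → Fin m → ℝ) (hΓ : Continuous Γ)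
    (γ : ℕ → ℝ) (hγmem : ∀ k, 0 < γ k ∧ γ k ≤ 1)
    (hγ : Tendsto γ atTop (nhds 0))
    (I : ℕ → ℕ) (A : (k : ℕ) → Fin (I k) → Set (Fin d → ℝ))
    (hAmeas : ∀ k i, MeasurableSet (A k i))
    (hcover : ∀ k, (⋃ i, A k i) = {x ∈ X | D x ≤ γ k})
    (hdisj : ∀ k, Pairwise fun i j => Disjoint (A k i) (A k j))
    (hposOrEmpty : ∀ k i, A k i = ∅ ∨ 0 < volume (A k i))
    (hmag : Tendsto (fun k => ⨆ i, Metric.diam (A k i)) atTop (nhds 0))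
    (Θty : Type*) (θ : (k : ℕ) → Fin (I k) → Θty)
    (EΓ : Θty → (Fin m → ℝ))
    -- moment matching: E_{θ_{i,k}}[Γ] = E_{h_{i,k}}[Γ], h_{i,k} uniform on A_{i,k}
    (hmatch : ∀ k i, (A k i).Nonempty →
      EΓ (θ k i) = ((volume (A k i)).toReal)⁻¹ • ∫ x in A k i, Γ x) :
    ∀ xstar ∈ X, D xstar = 0 →
      ∃ idx : (k : ℕ) → Fin (I k),
        (∀ k, xstar ∈ A k (idx k)) ∧
        Tendsto (fun k => EΓ (θ k (idx k))) atTop (nhds (Γ xstar)) :=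
  ideal_algorithm_convergence_general X hXbdd D Γ hΓ γ hγmem I A hcover hposOrEmpty hmag Θty θ EΓ
    hmatch
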